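/- arXiv:2309.04052 — 4 statements merged into one kernel-verified Lean document; each statement's English description precedes it below -/
import Mathlib

section
/- Let σ₀ ≥ σ̲ > 0, and let (σ_k) be a sequence of positive reals indexed by k < K (for some K ∈ ℕ). Suppose the index set {0,...,K−1} is partitioned into S and U such that σ_{k+1} ≥ κ̲·σ_k for k ∈ S and σ_{k+1} ≥ κ̄·σ_k for k ∈ U, where 0 < κ̲ < 1 < κ̄, and suppose σ_k ≤ σ̄ for all k ≤ K with σ̄ ≥ σ̲. Then |U| ≤ −(log κ̲ / log κ̄)·|S| + log(σ̄/σ̲)/log κ̄, and hence K = |S| + |U| ≤ (1 − log κ̲ / log κ̄)·|S| + log(σ̄/σ̲)/log κ̄. -/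
theorem stmt0 (σ : ℕ → ℝ) (K : ℕ) (S U : Finset ℕ)
    (κl κu σl σu : ℝ)
    (hκl : 0 < κl) (hκl1 : κl < 1) (hκu : 1 < κu)
    (hσl : 0 < σl) (hσlu : σl ≤ σu)
    (hσ0 : σl ≤ σ 0)
    (hpos : ∀ k, 0 < σ k)
    (hpart : S ∪ U = Finset.range K) (hdisj : Disjoint S U)
    (hS : ∀ k ∈ S, κl * σ k ≤ σ (k + 1))
    (hU : ∀ k ∈ U, κu * σ k ≤ σ (k + 1))
    (hub : ∀ k ≤ K, σ k ≤ σu) :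
    (U.card : ℝ) ≤ -(Real.log κl / Real.log κu) * S.card +
        Real.log (σu / σl) / Real.log κu ∧
    (K : ℝ) ≤ (1 - Real.log κl / Real.log κu) * S.card +
        Real.log (σu / σl) / Real.log κu := by
  have hκupos : (0:ℝ) < κu := lt_trans one_pos hκu
  have hlogκu : 0 < Real.log κu := Real.log_pos hκu
  have key : ∀ n ≤ K,
      σl * κl ^ ((S ∩ Finset.range n).card) * κu ^ ((U ∩ Finset.range n).card) ≤ σ n := by
    intro n hn
    induction n with
    | zero => simpa using hσ0
    | succ n ih =>
      have hn' : n ≤ K := Nat.le_of_succ_le hn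
      have ih' := ih hn'
      have hnmem : n ∈ S ∪ U := by
        rw [hpart]; exact Finset.mem_range.mpr (Nat.lt_of_succ_le hn)
      have hnr : n ∉ Finset.range n := by simp
      rcases Finset.mem_union.mp hnmem with hnS | hnU
      · have hnU : n ∉ U := Finset.disjoint_left.mp hdisj hnS
        have e1 : S ∩ Finset.range (n+1) = insert n (S ∩ Finset.range n) := by
          rw [Finset.range_add_one, Finset.inter_insert_of_mem hnS]
        have e2 : U ∩ Finset.range (n+1) = U ∩ Finset.range n := by
          rw [Finset.range_add_one, Finset.inter_insert_of_notMem hnU]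
        rw [e1, e2, Finset.card_insert_of_notMem (by simp)]
        calc σl * κl ^ ((S ∩ Finset.range n).card + 1) * κu ^ ((U ∩ Finset.range n).card)
            = κl * (σl * κl ^ ((S ∩ Finset.range n).card) * κu ^ ((U ∩ Finset.range n).card)) := by
              ring
          _ ≤ κl * σ n := by
              exact mul_le_mul_of_nonneg_left ih' (le_of_lt hκl)
          _ ≤ σ (n+1) := hS n hnS
      · have hnS : n ∉ S := Finset.disjoint_right.mp hdisj hnU
        have e1 : S ∩ Finset.range (n+1) = S ∩ Finset.range n := by
          rw [Finset.range_add_one, Finset.inter_insert_of_notMem hnS]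
        have e2 : U ∩ Finset.range (n+1) = insert n (U ∩ Finset.range n) := by
          rw [Finset.range_add_one, Finset.inter_insert_of_mem hnU]
        rw [e1, e2, Finset.card_insert_of_notMem (by simp)]
        calc σl * κl ^ ((S ∩ Finset.range n).card) * κu ^ ((U ∩ Finset.range n).card + 1)
            = κu * (σl * κl ^ ((S ∩ Finset.range n).card) * κu ^ ((U ∩ Finset.range n).card)) := by
              ring
          _ ≤ κu * σ n := by
              exact mul_le_mul_of_nonneg_left ih' (le_of_lt hκupos)
          _ ≤ σ (n+1) := hU n hnU
  have hSsub : S ⊆ Finset.range K := hpart ▸ Finset.subset_union_left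
  have hUsub : U ⊆ Finset.range K := hpart ▸ Finset.subset_union_right
  have hfin : σl * κl ^ S.card * κu ^ U.card ≤ σu := by
    have := key K le_rfl
    rw [Finset.inter_eq_left.mpr hSsub, Finset.inter_eq_left.mpr hUsub] at this
    exact this.trans (hub K le_rfl)
  have hσu : 0 < σu := lt_of_lt_of_le hσl hσlu
  have hL : 0 < σl * κl ^ S.card * κu ^ U.card := by positivity
  have h1 : Real.log σl + (S.card : ℝ) * Real.log κl + (U.card : ℝ) * Real.log κu
      ≤ Real.log σu := by
    have hlog := Real.log_le_log hL hfin
    rwa [Real.log_mul (by positivity) (by positivity),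
      Real.log_mul (by positivity) (by positivity),
      Real.log_pow, Real.log_pow] at hlog
  have hdiv : Real.log (σu / σl) = Real.log σu - Real.log σl :=
    Real.log_div (ne_of_gt hσu) (ne_of_gt hσl)
  have first : (U.card : ℝ) ≤ -(Real.log κl / Real.log κu) * S.card +
      Real.log (σu / σl) / Real.log κu := by
    have heq : -(Real.log κl / Real.log κu) * (S.card : ℝ) +
        Real.log (σu / σl) / Real.log κu
        = (-(Real.log κl) * S.card + Real.log (σu / σl)) / Real.log κu := by ring
    rw [heq, le_div_iff₀ hlogκu, hdiv]
    nlinarith [h1]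
  refine ⟨first, ?_⟩
  have hK : (K : ℝ) = (S.card : ℝ) + (U.card : ℝ) := by
    have : K = S.card + U.card := by
      rw [← Finset.card_range K, ← hpart, Finset.card_union_of_disjoint hdisj]
    rw [this]; push_cast; ring
  rw [hK]
  nlinarith [first]
end

section
/- Let H be a finite-dimensional real inner product space, g ∈ H, A : H → H self-adjoint with operator norm at most β_H, σ > 0, ω ∈ (0,1]. Define m̄(η) = ⟨η, g⟩ + (1/2)⟨η, A η⟩ + (σ/(2+ω))‖η‖^{2+ω}, and let η^C be a minimizer of m̄ over the line span{g}. Then m̄(0) − m̄(η^C) ≥ ‖g‖² / (4 · max{ β_H, σ^{1/(1+ω)} ‖g‖^{ω/(1+ω)} }). -/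
theorem stmt3 {H : Type*} [NormedAddCommGroup H] [InnerProductSpace ℝ H]
    [FiniteDimensional ℝ H]
    (g : H) (A : H →L[ℝ] H)
    (hA : ∀ x y : H, (inner ℝ (A x) y : ℝ) = inner ℝ x (A y))
    (βH σ ω : ℝ) (hβ : ‖A‖ ≤ βH) (hσ : 0 < σ) (hω : 0 < ω) (hω1 : ω ≤ 1)
    (m : H → ℝ)
    (hm : ∀ η : H, m η = (inner ℝ η g : ℝ) + (1 / 2) * (inner ℝ η (A η) : ℝ) +
        (σ / (2 + ω)) * ‖η‖ ^ (2 + ω))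
    (ηC : H) (τ₀ : ℝ) (hηC : ηC = τ₀ • g)
    (hmin : ∀ τ : ℝ, m ηC ≤ m (τ • g)) :
    ‖g‖ ^ 2 / (4 * max βH (σ ^ (1 / (1 + ω)) * ‖g‖ ^ (ω / (1 + ω)))) ≤
      m 0 - m ηC := by
  have h2ω : (0:ℝ) < 2 + ω := by linarith
  have hm0 : m 0 = 0 := by
    rw [hm]
    simp [Real.zero_rpow h2ω.ne']
  by_cases hg : g = 0
  · subst hg
    have hηC0 : ηC = 0 := by simpa using hηC
    rw [hm0, hηC0, hm0]
    simp
  · have hgn : 0 < ‖g‖ := norm_pos_iff.mpr hg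
    have h1ω : (0:ℝ) < 1 + ω := by linarith
    set c := σ ^ (1/(1+ω)) * ‖g‖ ^ (ω/(1+ω)) with hc
    have hcpos : 0 < c := by
      apply mul_pos (Real.rpow_pos_of_pos hσ _) (Real.rpow_pos_of_pos hgn _)
    set β := max βH c with hβdef
    have hβpos : 0 < β := lt_of_lt_of_le hcpos (le_max_right _ _)
    set t := 1/(2*β) with ht
    have htpos : 0 < t := by positivity
    have htβ : t * β = 1/2 := by
      rw [ht]; field_simp
    -- c ^ (1+ω) = σ * ‖g‖^ω
    have hcpow : c ^ (1+ω) = σ * ‖g‖ ^ ω := by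
      rw [hc, Real.mul_rpow (Real.rpow_nonneg hσ.le _) (Real.rpow_nonneg hgn.le _),
        ← Real.rpow_mul hσ.le, ← Real.rpow_mul hgn.le,
        one_div_mul_cancel h1ω.ne', div_mul_cancel₀ _ h1ω.ne', Real.rpow_one]
    have hsg : 0 < σ * ‖g‖ ^ ω := by positivity
    -- key small inequality
    have ht_le : t ≤ 1/(2*c) := by
      rw [ht]
      gcongr
      exact le_max_right _ _
    have hK1 : t ^ (1+ω) ≤ (1/(2*c)) ^ (1+ω) :=
      Real.rpow_le_rpow htpos.le ht_le h1ω.le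
    have h2pow : (2:ℝ) ≤ (2:ℝ) ^ (1+ω) := by
      calc (2:ℝ) = (2:ℝ) ^ (1:ℝ) := (Real.rpow_one 2).symm
      _ ≤ (2:ℝ) ^ (1+ω) := Real.rpow_le_rpow_of_exponent_le (by norm_num) (by linarith)
    have hK2 : ((1:ℝ)/(2*c)) ^ (1+ω) = 1 / ((2:ℝ)^(1+ω) * (σ * ‖g‖ ^ ω)) := by
      rw [Real.div_rpow (by norm_num) (by positivity), Real.one_rpow,
        Real.mul_rpow (by norm_num) hcpos.le, hcpow]
    have hK3 : t ^ (1+ω) ≤ 1 / (2 * (σ * ‖g‖ ^ ω)) := by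
      refine le_trans (hK1.trans_eq hK2) ?_
      gcongr
    have hK : σ * t ^ (1+ω) * ‖g‖ ^ ω ≤ 1/2 := by
      have := mul_le_mul_of_nonneg_left hK3 hσ.le
      have h2 := mul_le_mul_of_nonneg_right this (Real.rpow_nonneg hgn.le ω)
      calc σ * t ^ (1+ω) * ‖g‖ ^ ω ≤ σ * (1 / (2 * (σ * ‖g‖ ^ ω))) * ‖g‖ ^ ω := h2
      _ = 1/2 := by field_simp
    -- value of m at (-t) • g
    set Q : ℝ := inner ℝ g (A g) with hQdef
    have hQ : Q ≤ β * ‖g‖ ^ 2 := by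
      have h1 : Q ≤ ‖g‖ * ‖A g‖ := real_inner_le_norm g (A g)
      have h2 : ‖A g‖ ≤ ‖A‖ * ‖g‖ := A.le_opNorm g
      have hβH : βH ≤ β := le_max_left _ _
      nlinarith [norm_nonneg (A g), norm_nonneg g, norm_nonneg A]
    have hmt : m ((-t) • g) =
        -(t * ‖g‖ ^ 2) + t^2/2 * Q + σ/(2+ω) * (t ^ ((2:ℝ)+ω) * ‖g‖ ^ ((2:ℝ)+ω)) := by
      rw [hm, real_inner_smul_left, real_inner_self_eq_norm_sq, map_smul,
        real_inner_smul_left, real_inner_smul_right, norm_smul,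
        Real.norm_eq_abs, abs_neg, abs_of_pos htpos,
        Real.mul_rpow htpos.le (norm_nonneg g)]
      ring
    have hsplit : t ^ ((2:ℝ)+ω) * ‖g‖ ^ ((2:ℝ)+ω) = (t ^ (1+ω) * ‖g‖ ^ ω) * (t * ‖g‖ ^ 2) := by
      rw [show (2:ℝ)+ω = (1+ω)+1 by ring, Real.rpow_add htpos, Real.rpow_one,
        show ((1:ℝ)+ω)+1 = ω + 2 by ring, Real.rpow_add hgn,
        show ((2:ℝ)) = ((2:ℕ):ℝ) by norm_num, Real.rpow_natCast]
      ring
    have hT3 : σ/(2+ω) * (t ^ ((2:ℝ)+ω) * ‖g‖ ^ ((2:ℝ)+ω)) ≤ t/4 * ‖g‖ ^ 2 := by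
      rw [hsplit]
      calc σ/(2+ω) * ((t ^ (1+ω) * ‖g‖ ^ ω) * (t * ‖g‖ ^ 2))
          = (σ * t ^ (1+ω) * ‖g‖ ^ ω) * (t * ‖g‖ ^ 2) / (2+ω) := by ring
        _ ≤ (1/2) * (t * ‖g‖ ^ 2) / 2 := by
            apply div_le_div₀ (by positivity) ?_ (by norm_num) (by linarith)
            exact mul_le_mul_of_nonneg_right hK (by positivity)
        _ = t/4 * ‖g‖ ^ 2 := by ring
    have hT2 : t^2/2 * Q ≤ t/4 * ‖g‖ ^ 2 := by
      calc t^2/2 * Q ≤ t^2/2 * (β * ‖g‖ ^ 2) :=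
            mul_le_mul_of_nonneg_left hQ (by positivity)
        _ = (t * β) * (t/2 * ‖g‖ ^ 2) := by ring
        _ = t/4 * ‖g‖ ^ 2 := by rw [htβ]; ring
    have hfin : m ((-t) • g) ≤ -(t/2 * ‖g‖ ^ 2) := by
      rw [hmt]; linarith
    have hminc := hmin (-t)
    have heq : ‖g‖ ^ 2 / (4 * β) = t/2 * ‖g‖ ^ 2 := by
      rw [ht, div_div, show (2*β*2:ℝ) = 4*β by ring, one_div]
      exact div_eq_inv_mul _ _
    rw [hm0]
    linarith
end

section
/- Let H be a finite-dimensional real inner product space, g ∈ H, A self-adjoint, σ > 0, α ∈ (0,1]. Let m̄(η) = ⟨η,g⟩ + (1/2)⟨η,Aη⟩ + (σ/(2+α))‖η‖^{2+α}, and let η* be a global minimizer of m̄ satisfying the optimality conditions g + Aη* + σ‖η*‖^α η* = 0 and λ_min(A) + σ‖η*‖^α ≥ 0. Then m̄(0) − m̄(η*) = (1/2)⟨η*, Aη*⟩ + ((1+α)/(2+α))·σ‖η*‖^{2+α} ≥ (α/(2(2+α)))·σ‖η*‖^{2+α}. -/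
theorem stmt11 {H : Type*} [NormedAddCommGroup H] [InnerProductSpace ℝ H]
    [FiniteDimensional ℝ H]
    (g : H) (A : H →L[ℝ] H)
    (hA : ∀ x y : H, (inner ℝ (A x) y : ℝ) = inner ℝ x (A y))
    (σ α : ℝ) (hσ : 0 < σ) (hα : 0 < α) (hα1 : α ≤ 1)
    (m : H → ℝ)
    (hm : ∀ η : H, m η = (inner ℝ η g : ℝ) + (1 / 2) * (inner ℝ η (A η) : ℝ) +
        (σ / (2 + α)) * ‖η‖ ^ (2 + α))
    (ηs : H)
    (hfoc : g + A ηs + (σ * ‖ηs‖ ^ α) • ηs = 0)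
    (hsoc : ∀ ξ : H, 0 ≤ (inner ℝ ξ (A ξ) : ℝ) + σ * ‖ηs‖ ^ α * ‖ξ‖ ^ 2) :
    m 0 - m ηs = (1 / 2) * (inner ℝ ηs (A ηs) : ℝ) +
        ((1 + α) / (2 + α)) * σ * ‖ηs‖ ^ (2 + α) ∧
    (α / (2 * (2 + α))) * σ * ‖ηs‖ ^ (2 + α) ≤ m 0 - m ηs := by
  have h2α : (0:ℝ) < 2 + α := by linarith
  have hrnn : (0:ℝ) ≤ ‖ηs‖ := norm_nonneg _
  have hkey : ‖ηs‖ ^ (2 + α) = ‖ηs‖ ^ α * ‖ηs‖ ^ 2 := by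
    rcases eq_or_lt_of_le hrnn with h0 | h0
    · rw [← h0, Real.zero_rpow (ne_of_gt h2α), Real.zero_rpow (ne_of_gt hα)]
      ring
    · rw [← Real.rpow_natCast ‖ηs‖ 2, ← Real.rpow_add h0]
      norm_num
      ring_nf
  have hQg : (inner ℝ ηs g : ℝ) = -(inner ℝ ηs (A ηs) : ℝ) - σ * ‖ηs‖ ^ α * ‖ηs‖ ^ 2 := by
    have h := congrArg (fun x => (inner ℝ ηs x : ℝ)) hfoc
    simp only [inner_add_right, inner_smul_right, inner_zero_right,
      real_inner_self_eq_norm_sq] at h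
    linarith
  have hm0 : m 0 = 0 := by
    rw [hm]
    simp [Real.zero_rpow (ne_of_gt h2α)]
  have heq : m 0 - m ηs = (1 / 2) * (inner ℝ ηs (A ηs) : ℝ) +
      ((1 + α) / (2 + α)) * σ * ‖ηs‖ ^ (2 + α) := by
    rw [hm0, hm, hQg, hkey]
    field_simp
    ring
  refine ⟨heq, ?_⟩
  rw [heq]
  have hQ := hsoc ηs
  have : -(σ * ‖ηs‖ ^ (2 + α)) ≤ (inner ℝ ηs (A ηs) : ℝ) := by
    rw [hkey]; linarith
  have hle : (α / (2 * (2 + α))) * σ * ‖ηs‖ ^ (2 + α)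
      = (1/2) * (-(σ * ‖ηs‖ ^ (2 + α))) + ((1 + α) / (2 + α)) * σ * ‖ηs‖ ^ (2 + α) := by
    field_simp
    ring
  rw [hle]
  nlinarith [this]
end

section
/- Let t, Δ, ε, C_d, C_R > 0 with ν ∈ (0,1] and μ∧ν ≤ ν, and suppose Δ ≤ 1 satisfies G·Δ·(3/8 − C_R·Δ^ν) ≤ C_d·Δ^{2+μ∧ν} − (3/16)·ε·Δ² for some G > 0. Then Δ ≥ min{ (3/(8C_R))^{1/ν}, (3ε/(16C_d))^{1/(μ∧ν)} }. -/
lemma aux17 (Δ c p : ℝ) (hΔ : 0 < Δ) (hc : 0 ≤ c) (hp : 0 < p)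
    (h : c ≤ Δ ^ p) : c ^ (1 / p) ≤ Δ := by
  have := Real.rpow_le_rpow hc h (le_of_lt (one_div_pos.mpr hp))
  rwa [← Real.rpow_mul hΔ.le, mul_one_div, div_self hp.ne', Real.rpow_one] at this

theorem stmt17 (t Δ ε Cd CR G μ ν : ℝ)
    (ht : 0 < t) (hΔ : 0 < Δ) (hε : 0 < ε) (hCd : 0 < Cd) (hCR : 0 < CR)
    (hG : 0 < G) (hμ : 0 < μ) (hν : 0 < ν) (hν1 : ν ≤ 1) (hμν : min μ ν ≤ ν)
    (hΔ1 : Δ ≤ 1)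
    (h : G * Δ * (3 / 8 - CR * Δ ^ ν) ≤
        Cd * Δ ^ (2 + min μ ν) - 3 / 16 * ε * Δ ^ 2) :
    min ((3 / (8 * CR)) ^ (1 / ν)) ((3 * ε / (16 * Cd)) ^ (1 / min μ ν)) ≤ Δ := by
  have hm : 0 < min μ ν := lt_min hμ hν
  by_cases hcase : 3 / 8 - CR * Δ ^ ν ≤ 0
  · refine le_trans (min_le_left _ _) (aux17 Δ _ ν hΔ (by positivity) hν ?_)
    rw [div_le_iff₀ (by positivity)]
    linarith
  · refine le_trans (min_le_right _ _) (aux17 Δ _ (min μ ν) hΔ (by positivity) hm ?_)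
    push_neg at hcase
    have hlhs : 0 < G * Δ * (3 / 8 - CR * Δ ^ ν) := by positivity
    have hsplit : Δ ^ (2 + min μ ν) = Δ ^ 2 * Δ ^ (min μ ν) := by
      rw [Real.rpow_add hΔ, Real.rpow_two]
    rw [hsplit] at h
    have h2 : 3 / 16 * ε * Δ ^ 2 < Cd * (Δ ^ 2 * Δ ^ (min μ ν)) := by linarith
    have h3 : 3 / 16 * ε < Cd * Δ ^ (min μ ν) := by
      have hΔ2 : (0:ℝ) < Δ ^ 2 := by positivity
      rw [show Cd * (Δ ^ 2 * Δ ^ (min μ ν)) = Cd * Δ ^ (min μ ν) * Δ ^ 2 by ring,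
        show 3 / 16 * ε * Δ ^ 2 = 3 / 16 * ε * Δ ^ 2 from rfl] at h2
      exact lt_of_mul_lt_mul_right (by linarith) hΔ2.le
    rw [div_le_iff₀ (by positivity)]
    nlinarith
end
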